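/- arXiv:2304.05308 — 3 statements merged into one kernel-verified Lean document; each statement's English description precedes it below -/
import Mathlib

section
/- Fix ζ > 0, r > 0 and integers 0 ≤ M ≤ m. Let μ, z ∈ 𝓜_ζ with μ ≠ z, and set h = |R(z) \ R(μ)|. Then 0 ≤ h ≤ M and ⟨μ − z, q(μ) − q(z)⟩ ≤ −h ζ r. -/
/-!
Only the coordinates in `R(z) \ R(μ)` and `R(μ) \ R(z)` contribute to the inner product, and these
two sets have the same size `h`, so they can be paired off. For `i ∈ R(z) \ R(μ)` and
`j ∈ R(μ) \ R(z)` the top-`M` property gives `μ i < μ j` and `z j < z i`, and ζ-separation of `μ`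
sharpens the first to `μ i + ζ < μ j`; so each of the `h` pairs contributes at most `-ζ r`.
-/

/-- The ζ-separated multiplier set: all vectors with nonnegative components,
each component either `0` or at least `ζ`, and pairwise distances exceeding `ζ`. -/
def SepSet (m : ℕ) (ζ : ℝ) : Set (Fin m → ℝ) :=
  {μ | (∀ ℓ, 0 ≤ μ ℓ) ∧ (∀ ℓ, μ ℓ = 0 ∨ ζ ≤ μ ℓ) ∧ ∀ i j, i ≠ j → ζ < |μ i - μ j|}

/-- `S` is the set of indices of the `M` largest components of `μ`. -/
def IsTopM {m : ℕ} (M : ℕ) (μ : Fin m → ℝ) (S : Finset (Fin m)) : Prop :=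
  S.card = M ∧ ∀ i ∈ S, ∀ j ∉ S, μ j < μ i

/-- The tightening vector associated with an index set `S` and magnitude `r`:
its `ℓ`-th component is `0` if `ℓ ∈ S` and `r` otherwise. -/
def tight {m : ℕ} (r : ℝ) (S : Finset (Fin m)) : Fin m → ℝ :=
  fun ℓ => if ℓ ∈ S then 0 else r

open Finset

theorem Finset.sum_sub_sum_le_of_forall_add_le {ι : Type*} {A B : Finset ι} (f : ι → ℝ) (c : ℝ)
    (hcard : #A = #B) (h : ∀ i ∈ A, ∀ j ∈ B, f i + c ≤ f j) :
    ∑ i ∈ A, f i - ∑ j ∈ B, f j ≤ -(#A * c) := by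
  let e : A ≃ B := Finset.equivOfCardEq hcard
  have hB : ∑ j ∈ B, f j = ∑ i : A, f (e i) := by
    rw [← sum_coe_sort B]
    exact (e.sum_comp fun j : B => f j).symm
  calc ∑ i ∈ A, f i - ∑ j ∈ B, f j = ∑ i : A, (f i - f (e i)) := by
        rw [hB, ← sum_coe_sort A, sum_sub_distrib]
    _ ≤ ∑ _i : A, -c := sum_le_sum fun i _ => by linarith [h i i.2 (e i) (e i).2]
    _ = -(#A * c) := by simp

theorem sum_mul_tight_sub_tight {m : ℕ} (f : Fin m → ℝ) (r : ℝ) (S T : Finset (Fin m)) :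
    ∑ ℓ, f ℓ * (tight r S ℓ - tight r T ℓ) = r * (∑ ℓ ∈ T \ S, f ℓ - ∑ ℓ ∈ S \ T, f ℓ) := by
  have hpoint : ∀ ℓ, f ℓ * (tight r S ℓ - tight r T ℓ)
      = r * (if ℓ ∈ T then f ℓ else 0) - r * (if ℓ ∈ S then f ℓ else 0) := by
    intro ℓ
    simp only [tight]
    split_ifs <;> ring
  simp only [hpoint, sum_sub_distrib, ← mul_sum, sum_ite_mem, univ_inter, ← mul_sub,
    sum_sdiff_sub_sum_sdiff]

theorem SepSet.add_lt_of_lt {m : ℕ} {ζ : ℝ} {μ : Fin m → ℝ} (hμ : μ ∈ SepSet m ζ) {i j : Fin m}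
    (hij : μ i < μ j) : μ i + ζ < μ j := by
  have hsep := hμ.2.2 i j fun h => hij.ne (congrArg μ h)
  rw [abs_of_neg (sub_neg.mpr hij)] at hsep
  linarith

theorem stmt2_general {m M : ℕ} (ζ r : ℝ) (hr : 0 < r)
    (μ z : Fin m → ℝ) (hμ : μ ∈ SepSet m ζ)
    (Rμ Rz : Finset (Fin m)) (hRμ : IsTopM M μ Rμ) (hRz : IsTopM M z Rz) :
    (Rz \ Rμ).card ≤ M ∧
      ∑ ℓ, (μ ℓ - z ℓ) * (tight r Rμ ℓ - tight r Rz ℓ) ≤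
        -(((Rz \ Rμ).card : ℝ) * ζ * r) := by
  refine ⟨(card_le_card sdiff_subset).trans hRz.1.le, ?_⟩
  have hcard : #(Rz \ Rμ) = #(Rμ \ Rz) := card_sdiff_comm (hRz.1.trans hRμ.1.symm)
  have hpair : ∀ i ∈ Rz \ Rμ, ∀ j ∈ Rμ \ Rz, μ i - z i + ζ ≤ μ j - z j := by
    intro i hi j hj
    rw [mem_sdiff] at hi hj
    have hμij := SepSet.add_lt_of_lt hμ (hRμ.2 j hj.1 i hi.2)
    linarith [hRz.2 i hi.1 j hj.2]
  calc ∑ ℓ, (μ ℓ - z ℓ) * (tight r Rμ ℓ - tight r Rz ℓ)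
      = r * (∑ ℓ ∈ Rz \ Rμ, (μ ℓ - z ℓ) - ∑ ℓ ∈ Rμ \ Rz, (μ ℓ - z ℓ)) :=
        sum_mul_tight_sub_tight _ r Rμ Rz
    _ ≤ r * -(#(Rz \ Rμ) * ζ) :=
        mul_le_mul_of_nonneg_left (sum_sub_sum_le_of_forall_add_le _ ζ hcard hpair) hr.le
    _ = -(#(Rz \ Rμ) * ζ * r) := by ring

/-- For ζ-separated multiplier vectors `μ ≠ z`, letting `h = |R(z) \ R(μ)|`,
one has `0 ≤ h ≤ M` and `⟨μ − z, q(μ) − q(z)⟩ ≤ −h ζ r`. -/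
theorem stmt2 {m M : ℕ} (hM : M ≤ m) (ζ r : ℝ) (hζ : 0 < ζ) (hr : 0 < r)
    (μ z : Fin m → ℝ) (hμ : μ ∈ SepSet m ζ) (hz : z ∈ SepSet m ζ) (hne : μ ≠ z)
    (Rμ Rz : Finset (Fin m)) (hRμ : IsTopM M μ Rμ) (hRz : IsTopM M z Rz) :
    (Rz \ Rμ).card ≤ M ∧
      ∑ ℓ, (μ ℓ - z ℓ) * (tight r Rμ ℓ - tight r Rz ℓ) ≤
        -(((Rz \ Rμ).card : ℝ) * ζ * r) :=
  stmt2_general ζ r hr μ z hμ Rμ Rz hRμ hRz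
end

section
/- Fix ζ > 0, r > 0 and integers 0 ≤ M ≤ m. If μ, z ∈ 𝓜_ζ satisfy ‖μ − z‖_∞ < ζ/2, then R(μ) = R(z) and hence q(μ) = q(z); that is, the tightening map μ ↦ q(μ) is locally constant on 𝓜_ζ. Consequently, for any continuous F : ℝ^d → ℝ^d, any matrix A ∈ ℝ^{m×d} and any b ∈ ℝ^m, the map T(x, μ) = (F(x) + Aᵀμ, −(Ax − b + q(μ))) is continuous on ℝ^d × 𝓜_ζ (with the subspace topology). -/
/-!
Distinct components of `μ ∈ 𝓜_ζ` are more than `ζ` apart, while passing to `z` with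
`‖μ - z‖_∞ < ζ / 2` moves each component by less than `ζ / 2`; so `z` orders its components
as `μ` does and has the same top-`M` index set. Hence `q` is constant on `ζ / 2`-balls of `𝓜_ζ`,
which makes it continuous there, and the remaining parts of `T` are continuous everywhere.
-/

open Matrix

theorem IsTopM.unique {m M : ℕ} {μ : Fin m → ℝ} {S T : Finset (Fin m)}
    (hS : IsTopM M μ S) (hT : IsTopM M μ T) : S = T := by
  by_contra hne
  have hST : (S \ T).Nonempty := Finset.sdiff_nonempty.mpr fun hsub =>
    hne (Finset.eq_of_subset_of_card_le hsub (by rw [hS.1, hT.1]))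
  have hTS : (T \ S).Nonempty := Finset.sdiff_nonempty.mpr fun hsub =>
    hne (Finset.eq_of_subset_of_card_le hsub (by rw [hS.1, hT.1])).symm
  obtain ⟨i, hi⟩ := hST
  obtain ⟨j, hj⟩ := hTS
  obtain ⟨hiS, hiT⟩ := Finset.mem_sdiff.mp hi
  obtain ⟨hjT, hjS⟩ := Finset.mem_sdiff.mp hj
  exact lt_asymm (hS.2 _ hiS _ hjS) (hT.2 _ hjT _ hiT)

theorem IsTopM.of_norm_sub_lt {m M : ℕ} {ζ : ℝ} {μ z : Fin m → ℝ} {S : Finset (Fin m)}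
    (hμ : μ ∈ SepSet m ζ) (hμz : ‖μ - z‖ < ζ / 2) (hS : IsTopM M μ S) : IsTopM M z S := by
  refine ⟨hS.1, fun i hi j hj => ?_⟩
  have hgap : ζ < μ i - μ j := by
    have hsep := hμ.2.2 i j (ne_of_mem_of_not_mem hi hj)
    rwa [abs_of_pos (sub_pos.mpr (hS.2 i hi j hj))] at hsep
  have hclose (k : Fin m) : |μ k - z k| < ζ / 2 :=
    (norm_le_pi_norm (μ - z) k).trans_lt hμz
  linarith [(abs_lt.mp (hclose i)).2, (abs_lt.mp (hclose j)).1]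

theorem continuousOn_of_dist_lt_imp_eq {X Y : Type*} [PseudoMetricSpace X] [TopologicalSpace Y]
    {f : X → Y} {s : Set X} {δ : ℝ} (hδ : 0 < δ)
    (hf : ∀ x ∈ s, ∀ y ∈ s, dist x y < δ → f x = f y) : ContinuousOn f s := by
  intro x hx
  refine (continuousWithinAt_const (b := f x)).congr_of_eventuallyEq ?_ rfl
  filter_upwards [inter_mem_nhdsWithin s (Metric.ball_mem_nhds x hδ)] with y ⟨hys, hyx⟩
  exact (hf x hx y hys (by rwa [dist_comm])).symm

theorem stmt5_general {d m M : ℕ} (ζ r : ℝ) (hζ : 0 < ζ)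
    (Q : (Fin m → ℝ) → Fin m → ℝ)
    (hQ : ∀ μ ∈ SepSet m ζ, ∃ S : Finset (Fin m), IsTopM M μ S ∧ Q μ = tight r S)
    (F : (Fin d → ℝ) → Fin d → ℝ) (hF : Continuous F)
    (A : Matrix (Fin m) (Fin d) ℝ) (b : Fin m → ℝ) :
    (∀ μ ∈ SepSet m ζ, ∀ z ∈ SepSet m ζ, ‖μ - z‖ < ζ / 2 →
      (∀ Rμ Rz : Finset (Fin m), IsTopM M μ Rμ → IsTopM M z Rz → Rμ = Rz) ∧ Q μ = Q z) ∧
      ContinuousOn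
        (fun p : (Fin d → ℝ) × (Fin m → ℝ) =>
          ((fun i => F p.1 i + Aᵀ.mulVec p.2 i : Fin d → ℝ),
            (fun ℓ => -(A.mulVec p.1 ℓ - b ℓ + Q p.2 ℓ) : Fin m → ℝ)))
        (Set.univ ×ˢ SepSet m ζ) := by
  have hlocal : ∀ μ ∈ SepSet m ζ, ∀ z ∈ SepSet m ζ, ‖μ - z‖ < ζ / 2 →
      (∀ Rμ Rz : Finset (Fin m), IsTopM M μ Rμ → IsTopM M z Rz → Rμ = Rz) ∧ Q μ = Q z := by
    intro μ hμ z hz hμz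
    obtain ⟨S, hS, hQμ⟩ := hQ μ hμ
    obtain ⟨T, hT, hQz⟩ := hQ z hz
    refine ⟨fun Rμ Rz hRμ hRz => (hRμ.of_norm_sub_lt hμ hμz).unique hRz, ?_⟩
    rw [hQμ, hQz, (hS.of_norm_sub_lt hμ hμz).unique hT]
  refine ⟨hlocal, ?_⟩
  have hQcont : ContinuousOn Q (SepSet m ζ) :=
    continuousOn_of_dist_lt_imp_eq (half_pos hζ) fun μ hμ z hz hμz =>
      (hlocal μ hμ z hz (by rwa [← dist_eq_norm])).2
  have hQsnd : ContinuousOn (fun p : (Fin d → ℝ) × (Fin m → ℝ) => Q p.2)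
      (Set.univ ×ˢ SepSet m ζ) :=
    hQcont.comp continuous_snd.continuousOn fun _ hp => hp.2
  refine ContinuousOn.prodMk ?_ ?_
  · exact ((hF.comp continuous_fst).add
      (continuous_const.matrix_mulVec continuous_snd)).continuousOn
  · exact (((continuous_const.matrix_mulVec continuous_fst).continuousOn.sub continuousOn_const).add
      hQsnd).neg

/-- The tightening map `μ ↦ q(μ)` is locally constant on the ζ-separated set: if
`μ, z ∈ 𝓜_ζ` with `‖μ − z‖_∞ < ζ/2` then `R(μ) = R(z)` and `q(μ) = q(z)`.
Consequently the primal–dual map `T(x, μ) = (F(x) + Aᵀμ, −(Ax − b + q(μ)))` is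
continuous on `ℝ^d × 𝓜_ζ`. -/
theorem stmt5 {d m M : ℕ} (hM : M ≤ m) (ζ r : ℝ) (hζ : 0 < ζ) (hr : 0 < r)
    (Q : (Fin m → ℝ) → Fin m → ℝ)
    (hQ : ∀ μ ∈ SepSet m ζ, ∃ S : Finset (Fin m), IsTopM M μ S ∧ Q μ = tight r S)
    (F : (Fin d → ℝ) → Fin d → ℝ) (hF : Continuous F)
    (A : Matrix (Fin m) (Fin d) ℝ) (b : Fin m → ℝ) :
    (∀ μ ∈ SepSet m ζ, ∀ z ∈ SepSet m ζ, ‖μ - z‖ < ζ / 2 →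
      (∀ Rμ Rz : Finset (Fin m), IsTopM M μ Rμ → IsTopM M z Rz → Rμ = Rz) ∧ Q μ = Q z) ∧
      ContinuousOn
        (fun p : (Fin d → ℝ) × (Fin m → ℝ) =>
          ((fun i => F p.1 i + Aᵀ.mulVec p.2 i : Fin d → ℝ),
            (fun ℓ => -(A.mulVec p.1 ℓ - b ℓ + Q p.2 ℓ) : Fin m → ℝ)))
        (Set.univ ×ˢ SepSet m ζ) :=
  stmt5_general ζ r hζ Q hQ F hF A b
end

section
/- Fix ζ > 0, r > 0 and integers 0 ≤ M ≤ m. Let X ⊆ ℝ^d, let F : ℝ^d → ℝ^d be α-strongly monotone on X for some α > 0, let A ∈ ℝ^{m×d} and b ∈ ℝ^m, and define T(x, μ) = (F(x) + Aᵀμ, −(Ax − b + q(μ))). Then for all x, x' ∈ X and all μ, μ' ∈ 𝓜_ζ, ⟨T(x, μ) − T(x', μ'), (x, μ) − (x', μ')⟩ ≥ α‖x − x'‖² + h ζ r ≥ α‖x − x'‖², where h = |R(μ') \ R(μ)|. In particular T is monotone on X × 𝓜_ζ. -/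
/-!
The coupling terms `⟨Aᵀ(μ - μ'), x - x'⟩` and `-⟨A(x - x'), μ - μ'⟩` cancel, so the pairing
reduces to `⟨F x - F x', x - x'⟩ + ⟨q(μ') - q(μ), μ - μ'⟩`. The first summand is at least
`α‖x - x'‖²`. In the second, `q(μ') - q(μ)` equals `r` on `R(μ) \ R(μ')`, `-r` on
`R(μ') \ R(μ)` and `0` elsewhere; both sets have `h` elements, and pairing them off, every
top index of `μ` exceeds every non-top index by more than `ζ` (and likewise for `μ'`), so
the second summand is at least `2hζr`.
-/

open Matrix

open Finset

lemma sum_add_card_mul_le_sum {ι : Type*} {s t : Finset ι} {f : ι → ℝ} {c : ℝ}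
    (hcard : t.card = s.card) (h : ∀ i ∈ s, ∀ j ∈ t, f j + c ≤ f i) :
    ∑ j ∈ t, f j + s.card * c ≤ ∑ i ∈ s, f i := by
  obtain rfl | hs := s.eq_empty_or_nonempty
  · simp_all
  -- sum the gap over all pairs `(i, j) ∈ s × t`, then divide by `s.card`
  have hdouble : ∑ i ∈ s, ∑ j ∈ t, (f j + c) ≤ ∑ i ∈ s, ∑ j ∈ t, f i :=
    sum_le_sum fun i hi => sum_le_sum fun j hj => h i hi j hj
  simp only [sum_add_distrib, sum_const, nsmul_eq_mul, hcard, ← mul_sum] at hdouble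
  have hpos : (0 : ℝ) < s.card := by exact_mod_cast hs.card_pos
  nlinarith

lemma IsTopM.card_sdiff_mul_le {m M : ℕ} {ζ : ℝ} {μ : Fin m → ℝ} {S T : Finset (Fin m)}
    (hsep : ∀ i j, i ≠ j → ζ < |μ i - μ j|) (hS : IsTopM M μ S) (hT : T.card = M) :
    ((S \ T).card : ℝ) * ζ ≤ ∑ i ∈ S \ T, μ i - ∑ j ∈ T \ S, μ j := by
  have hgap : ∀ i ∈ S \ T, ∀ j ∈ T \ S, μ j + ζ ≤ μ i := by
    intro i hi j hj
    have hlt := hS.2 i (mem_sdiff.1 hi).1 j (mem_sdiff.1 hj).2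
    have hsep_ij := hsep i j (ne_of_mem_of_not_mem (mem_sdiff.1 hi).1 (mem_sdiff.1 hj).2)
    rw [abs_of_pos (sub_pos.2 hlt)] at hsep_ij
    linarith
  have := sum_add_card_mul_le_sum (card_sdiff_comm (hT.trans hS.1.symm)) hgap
  linarith

lemma sum_tight_sub_tight_mul {m : ℕ} (r : ℝ) (S T : Finset (Fin m)) (v : Fin m → ℝ) :
    ∑ ℓ, (tight r T ℓ - tight r S ℓ) * v ℓ = r * (∑ ℓ ∈ S \ T, v ℓ - ∑ ℓ ∈ T \ S, v ℓ) := by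
  have hpt : ∀ ℓ, (tight r T ℓ - tight r S ℓ) * v ℓ
      = (if ℓ ∈ S \ T then r * v ℓ else 0) - (if ℓ ∈ T \ S then r * v ℓ else 0) := by
    intro ℓ
    by_cases hS : ℓ ∈ S <;> by_cases hT : ℓ ∈ T <;> simp [tight, hS, hT]
  simp only [hpt, sum_sub_distrib, sum_ite_mem, univ_inter, mul_sub, mul_sum]

lemma lagrangian_pairing_eq {d m : ℕ} (A : Matrix (Fin m) (Fin d) ℝ) (b : Fin m → ℝ)
    (f f' x x' : Fin d → ℝ) (μ μ' q q' : Fin m → ℝ) :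
    ∑ i, ((f i + (Aᵀ *ᵥ μ) i) - (f' i + (Aᵀ *ᵥ μ') i)) * (x i - x' i) +
        ∑ ℓ, (-((A *ᵥ x) ℓ - b ℓ + q ℓ) - -((A *ᵥ x') ℓ - b ℓ + q' ℓ)) * (μ ℓ - μ' ℓ) =
      ∑ i, (f i - f' i) * (x i - x' i) + ∑ ℓ, (q' ℓ - q ℓ) * (μ ℓ - μ' ℓ) := by
  have hskew : (Aᵀ *ᵥ (μ - μ')) ⬝ᵥ (x - x') = (A *ᵥ (x - x')) ⬝ᵥ (μ - μ') := by
    rw [mulVec_transpose, ← dotProduct_mulVec, dotProduct_comm]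
  simp only [dotProduct, mulVec_sub, Pi.sub_apply] at hskew
  have hprimal : ∀ i, ((f i + (Aᵀ *ᵥ μ) i) - (f' i + (Aᵀ *ᵥ μ') i)) * (x i - x' i) =
      (f i - f' i) * (x i - x' i) + ((Aᵀ *ᵥ μ) i - (Aᵀ *ᵥ μ') i) * (x i - x' i) :=
    fun i => by ring
  have hdual : ∀ ℓ, (-((A *ᵥ x) ℓ - b ℓ + q ℓ) - -((A *ᵥ x') ℓ - b ℓ + q' ℓ)) * (μ ℓ - μ' ℓ) =
      (q' ℓ - q ℓ) * (μ ℓ - μ' ℓ) - ((A *ᵥ x) ℓ - (A *ᵥ x') ℓ) * (μ ℓ - μ' ℓ) :=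
    fun ℓ => by ring
  simp only [hprimal, hdual, sum_add_distrib, sum_sub_distrib, hskew]
  ring

lemma two_mul_card_mul_le_sum_tight_sub_tight_mul {m M : ℕ} {ζ r : ℝ} (hr : 0 ≤ r)
    {μ μ' : Fin m → ℝ} (hsep : ∀ i j, i ≠ j → ζ < |μ i - μ j|)
    (hsep' : ∀ i j, i ≠ j → ζ < |μ' i - μ' j|) {S T : Finset (Fin m)}
    (hS : IsTopM M μ S) (hT : IsTopM M μ' T) :
    2 * ((T \ S).card : ℝ) * ζ * r ≤ ∑ ℓ, (tight r T ℓ - tight r S ℓ) * (μ ℓ - μ' ℓ) := by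
  have hgap := hS.card_sdiff_mul_le hsep hT.1
  have hgap' := hT.card_sdiff_mul_le hsep' hS.1
  rw [← card_sdiff_comm (hT.1.trans hS.1.symm)] at hgap
  rw [sum_tight_sub_tight_mul, sum_sub_distrib, sum_sub_distrib]
  nlinarith [mul_le_mul_of_nonneg_left (add_le_add hgap hgap') hr]

theorem stmt6_general {d m M : ℕ} (ζ r : ℝ) (hζ : 0 < ζ) (hr : 0 < r)
    (X : Set (Fin d → ℝ)) (F : (Fin d → ℝ) → Fin d → ℝ) (α : ℝ)
    (hmono : ∀ x ∈ X, ∀ y ∈ X,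
      α * ∑ i, (x i - y i) ^ 2 ≤ ∑ i, (F x i - F y i) * (x i - y i))
    (A : Matrix (Fin m) (Fin d) ℝ) (b : Fin m → ℝ)
    (x x' : Fin d → ℝ) (hx : x ∈ X) (hx' : x' ∈ X)
    (μ μ' : Fin m → ℝ) (hμ : μ ∈ SepSet m ζ) (hμ' : μ' ∈ SepSet m ζ)
    (Rμ Rμ' : Finset (Fin m)) (hRμ : IsTopM M μ Rμ) (hRμ' : IsTopM M μ' Rμ') :
    α * ∑ i, (x i - x' i) ^ 2 + ((Rμ' \ Rμ).card : ℝ) * ζ * r ≤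
        (∑ i, ((F x i + Aᵀ.mulVec μ i) - (F x' i + Aᵀ.mulVec μ' i)) * (x i - x' i) +
          ∑ ℓ, (-(A.mulVec x ℓ - b ℓ + tight r Rμ ℓ) -
              -(A.mulVec x' ℓ - b ℓ + tight r Rμ' ℓ)) * (μ ℓ - μ' ℓ)) ∧
      α * ∑ i, (x i - x' i) ^ 2 ≤
        (∑ i, ((F x i + Aᵀ.mulVec μ i) - (F x' i + Aᵀ.mulVec μ' i)) * (x i - x' i) +
          ∑ ℓ, (-(A.mulVec x ℓ - b ℓ + tight r Rμ ℓ) -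
              -(A.mulVec x' ℓ - b ℓ + tight r Rμ' ℓ)) * (μ ℓ - μ' ℓ)) := by
  rw [lagrangian_pairing_eq]
  have hF := hmono x hx x' hx'
  have hq := two_mul_card_mul_le_sum_tight_sub_tight_mul hr.le hμ.2.2 hμ'.2.2 hRμ hRμ'
  have hh : (0 : ℝ) ≤ ((Rμ' \ Rμ).card : ℝ) * ζ * r := by positivity
  constructor <;> linarith

/-- Monotonicity of the primal–dual map `T(x, μ) = (F(x) + Aᵀμ, −(Ax − b + q(μ)))` on
`X × 𝓜_ζ`: for `x, x' ∈ X` and `μ, μ' ∈ 𝓜_ζ`, with `h = |R(μ') \ R(μ)|`,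
`⟨T(x,μ) − T(x',μ'), (x,μ) − (x',μ')⟩ ≥ α‖x − x'‖² + hζr ≥ α‖x − x'‖²`. -/
theorem stmt6 {d m M : ℕ} (hM : M ≤ m) (ζ r : ℝ) (hζ : 0 < ζ) (hr : 0 < r)
    (X : Set (Fin d → ℝ)) (F : (Fin d → ℝ) → Fin d → ℝ) (α : ℝ) (hα : 0 < α)
    (hmono : ∀ x ∈ X, ∀ y ∈ X,
      α * ∑ i, (x i - y i) ^ 2 ≤ ∑ i, (F x i - F y i) * (x i - y i))
    (A : Matrix (Fin m) (Fin d) ℝ) (b : Fin m → ℝ)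
    (x x' : Fin d → ℝ) (hx : x ∈ X) (hx' : x' ∈ X)
    (μ μ' : Fin m → ℝ) (hμ : μ ∈ SepSet m ζ) (hμ' : μ' ∈ SepSet m ζ)
    (Rμ Rμ' : Finset (Fin m)) (hRμ : IsTopM M μ Rμ) (hRμ' : IsTopM M μ' Rμ') :
    α * ∑ i, (x i - x' i) ^ 2 + ((Rμ' \ Rμ).card : ℝ) * ζ * r ≤
        (∑ i, ((F x i + Aᵀ.mulVec μ i) - (F x' i + Aᵀ.mulVec μ' i)) * (x i - x' i) +
          ∑ ℓ, (-(A.mulVec x ℓ - b ℓ + tight r Rμ ℓ) -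
              -(A.mulVec x' ℓ - b ℓ + tight r Rμ' ℓ)) * (μ ℓ - μ' ℓ)) ∧
      α * ∑ i, (x i - x' i) ^ 2 ≤
        (∑ i, ((F x i + Aᵀ.mulVec μ i) - (F x' i + Aᵀ.mulVec μ' i)) * (x i - x' i) +
          ∑ ℓ, (-(A.mulVec x ℓ - b ℓ + tight r Rμ ℓ) -
              -(A.mulVec x' ℓ - b ℓ + tight r Rμ' ℓ)) * (μ ℓ - μ' ℓ)) :=
  stmt6_general ζ r hζ hr X F α hmono A b x x' hx hx' μ μ' hμ hμ' Rμ Rμ' hRμ hRμ'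
end
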